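/- Let R be a commutative integral domain and let ⋆ be a semistar operation on R that is stable and of finite type. Let I be a nonzero ideal of R such that I^⋆ ∩ R ≠ R. Then √(I^⋆) ∩ R = √(I^⋆ ∩ R) = ⋂_{P ∈ ⋆-Min(I)} P, the intersection of all quasi-⋆-prime ideals minimal over I. -/

import Mathlib

open Pointwise

/-- A semistar operation on an integral domain `R` with quotient field `K`:
a map `E ↦ E^⋆` on the nonzero `R`-submodules of `K` satisfying the usual axioms.
(The map is defined on all submodules, but the axioms are only required for the
nonzero ones.) -/
structure SemistarOperation (R K : Type*) [CommRing R] [IsDomain R] [Field K]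
    [Algebra R K] [IsFractionRing R K] where
  star : Submodule R K → Submodule R K
  smul_star : ∀ (x : K), x ≠ 0 → ∀ E : Submodule R K, E ≠ ⊥ → star (x • E) = x • star E
  mono : ∀ E F : Submodule R K, E ≠ ⊥ → E ≤ F → star E ≤ star F
  le_star : ∀ E : Submodule R K, E ≠ ⊥ → E ≤ star E
  star_star : ∀ E : Submodule R K, E ≠ ⊥ → star (star E) = star E

namespace SemistarOperation

variable {R K : Type*} [CommRing R] [IsDomain R] [Field K] [Algebra R K] [IsFractionRing R K]
variable (s : SemistarOperation R K)

/-- `⋆` is of finite type: for every nonzero submodule `E`, the module `E^⋆` is the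
union of the `F^⋆` over the nonzero finitely generated submodules `F ⊆ E`. -/
def FiniteType : Prop :=
  ∀ E : Submodule R K, E ≠ ⊥ → ∀ x : K,
    x ∈ s.star E ↔ ∃ F : Submodule R K, F.FG ∧ F ≠ ⊥ ∧ F ≤ E ∧ x ∈ s.star F

/-- `I^⋆`, for an ideal `I` of `R` (viewing `I` as a submodule of `K`). -/
def idealStar (I : Ideal R) : Submodule R K :=
  s.star (Submodule.map (Algebra.linearMap R K) I)

/-- `I^⋆ ∩ R`, as an ideal of `R`. -/
def contract (I : Ideal R) : Ideal R :=
  Submodule.comap (Algebra.linearMap R K) (s.idealStar I)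

/-- A (nonzero) ideal `I` of `R` is a quasi-`⋆`-ideal if `I^⋆ ∩ R = I`. -/
def IsQuasiStarIdeal (I : Ideal R) : Prop :=
  I ≠ ⊥ ∧ s.contract I = I

/-- A nonzero ideal `L` of `R` is `⋆`-finite if `L^⋆ = F^⋆` for some nonzero
finitely generated ideal `F` of `R`. -/
def IsStarFinite (L : Ideal R) : Prop :=
  L ≠ ⊥ ∧ ∃ F : Ideal R, F.FG ∧ F ≠ ⊥ ∧ s.idealStar F = s.idealStar L

/-- `⋆` is stable: it distributes over finite intersections (of nonzero submodules
with nonzero intersection). -/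
def Stable : Prop :=
  ∀ E F : Submodule R K, E ≠ ⊥ → F ≠ ⊥ → E ⊓ F ≠ ⊥ →
    s.star (E ⊓ F) = s.star E ⊓ s.star F

/-- `⋆-Min(I)`: the set of quasi-`⋆`-prime ideals of `R` minimal over `I`. -/
def starMin (I : Ideal R) : Set (Ideal R) :=
  {P | Minimal (fun Q : Ideal R => Q.IsPrime ∧ s.IsQuasiStarIdeal Q ∧ I ≤ Q) P}

/-- A nonzero ideal `I` of `R` is a `⋆`-SFT-ideal if there are a finitely generated
ideal `J ⊆ I` and a positive integer `k` with `a ^ k ∈ J^⋆` for every `a ∈ I^⋆`. -/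
def IsSFT (I : Ideal R) : Prop :=
  I ≠ ⊥ ∧ ∃ J : Ideal R, J.FG ∧ J ≤ I ∧ ∃ k : ℕ, 0 < k ∧
    ∀ a ∈ s.idealStar I, a ^ k ∈ s.idealStar J

/-- `R` is a `⋆`-SFT-ring if every nonzero ideal of `R` is a `⋆`-SFT-ideal. -/
def IsSFTRing : Prop := ∀ I : Ideal R, I ≠ ⊥ → s.IsSFT I

end SemistarOperation

/-!
Put `J = I^⋆ ∩ R`, a quasi-`⋆`-ideal containing `I`. The heart of the matter is that every minimal
prime `Q` of `J` is again a quasi-`⋆`-ideal: for `z ∈ Q^⋆ ∩ R`, finite type puts `z` in `F^⋆` for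
some finitely generated `F ⊆ Q`; minimality of `Q` yields `t ∉ Q` and `n` with `t F^n ⊆ J`, so
`t z^n ∈ (F^⋆)^n t ⊆ (t F^n)^⋆ ⊆ J^⋆`, i.e. `t z^n ∈ J ⊆ Q`, whence `z ∈ Q`. Consequently
`⋆-Min(I)` is exactly the set of minimal primes of `J`, whose intersection is `√J`.
-/

namespace Ideal

variable {A : Type*} [CommSemiring A] {J Q : Ideal A}

theorem exists_mul_pow_mem_of_mem_minimalPrimes (hQ : Q ∈ J.minimalPrimes) {x : A}
    (hx : x ∈ Q) : ∃ t ∉ Q, ∃ n : ℕ, t * x ^ n ∈ J := by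
  have := hQ.isPrime
  -- A prime over `J` avoiding `t * x ^ n` for all `t ∉ Q` would lie in `Q` and miss `x`.
  have : ¬Disjoint (J : Set A) (Q.primeCompl ⊔ Submonoid.powers x : Submonoid A) := by
    intro hd
    obtain ⟨P, hP, hJP, hPd⟩ := exists_le_prime_disjoint J _ hd
    have hPQ : P ≤ Q := fun p hp => by_contra fun hpQ =>
      Set.disjoint_left.mp hPd hp (Submonoid.mem_sup_left hpQ)
    exact Set.disjoint_left.mp hPd (hQ.2 ⟨hP, hJP⟩ hPQ hx)
      (Submonoid.mem_sup_right (Submonoid.mem_powers x))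
  obtain ⟨y, hyJ, hy⟩ := Set.not_disjoint_iff.mp this
  obtain ⟨t, ht, _, ⟨n, rfl⟩, rfl⟩ := Submonoid.mem_sup.mp hy
  exact ⟨t, ht, n, hyJ⟩

theorem exists_span_singleton_mul_pow_le_of_mem_minimalPrimes (hQ : Q ∈ J.minimalPrimes)
    {F : Ideal A} (hF : F.FG) (hFQ : F ≤ Q) : ∃ t ∉ Q, ∃ n : ℕ, span {t} * F ^ n ≤ J := by
  induction F, hF using Submodule.fg_induction with
  | singleton x =>
    obtain ⟨t, ht, n, htx⟩ :=
      exists_mul_pow_mem_of_mem_minimalPrimes hQ (hFQ (Submodule.mem_span_singleton_self x))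
    refine ⟨t, ht, n, ?_⟩
    rwa [← span, span_singleton_pow, span_singleton_mul_span_singleton, span_singleton_le_iff_mem]
  | sup M N _ _ hM hN =>
    obtain ⟨t₁, ht₁, n₁, h₁⟩ := hM (le_sup_left.trans hFQ)
    obtain ⟨t₂, ht₂, n₂, h₂⟩ := hN (le_sup_right.trans hFQ)
    refine ⟨t₁ * t₂, hQ.isPrime.mul_notMem ht₁ ht₂, n₁ + n₂, ?_⟩
    calc span {t₁ * t₂} * (M ⊔ N) ^ (n₁ + n₂)
        ≤ span {t₁ * t₂} * (M ^ n₁ ⊔ N ^ n₂) := mul_mono_right sup_pow_add_le_pow_sup_pow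
      _ = span {t₂} * (span {t₁} * M ^ n₁) ⊔ span {t₁} * (span {t₂} * N ^ n₂) := by
        rw [mul_sup, ← span_singleton_mul_span_singleton]; congr 1 <;> ring
      _ ≤ J := sup_le (mul_le_right.trans h₁) (mul_le_right.trans h₂)

end Ideal

open IsLocalization

theorem IsLocalization.coeSubmodule_pow {R S : Type*} [CommRing R] [CommRing S] [Algebra R S]
    (I : Ideal R) (n : ℕ) : coeSubmodule S (I ^ n) = coeSubmodule S I ^ n :=
  Submodule.map_pow (M := I) (Algebra.ofId R S) n

namespace IsFractionRing

variable {R K : Type*} [CommRing R] [CommRing K] [Algebra R K] [IsFractionRing R K]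

theorem coeSubmodule_eq_bot {I : Ideal R} : coeSubmodule K I = ⊥ ↔ I = ⊥ := by
  rw [← coeSubmodule_bot K, (coeSubmodule_injective R K).eq_iff]

theorem coeSubmodule_ne_bot {I : Ideal R} (hI : I ≠ ⊥) : coeSubmodule K I ≠ ⊥ :=
  coeSubmodule_eq_bot.not.2 hI

theorem exists_fg_coeSubmodule_eq {I : Ideal R} {F : Submodule R K} (hF : F.FG)
    (hFI : F ≤ coeSubmodule K I) : ∃ F₀ : Ideal R, F₀.FG ∧ F₀ ≤ I ∧ coeSubmodule K F₀ = F := by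
  have hF₀ : coeSubmodule K (F.comap (Algebra.linearMap R K)) = F :=
    Submodule.map_comap_eq_of_le (hFI.trans LinearMap.map_le_range)
  refine ⟨_, ?_, ?_, hF₀⟩
  · exact (coeSubmodule_fg _ (IsFractionRing.injective R K) _).1 (by rwa [hF₀])
  · rw [← coeSubmodule_le_coeSubmodule (K := K), hF₀]; exact hFI

end IsFractionRing

namespace SemistarOperation

variable {R K : Type*} [CommRing R] [IsDomain R] [Field K] [Algebra R K] [IsFractionRing R K]
  (s : SemistarOperation R K) {E F G : Submodule R K}

theorem star_ne_bot (hE : E ≠ ⊥) : s.star E ≠ ⊥ :=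
  ne_bot_of_le_ne_bot hE (s.le_star E hE)

theorem star_le_star_of_le_star (hE : E ≠ ⊥) (hG : G ≠ ⊥) (h : E ≤ s.star G) :
    s.star E ≤ s.star G :=
  (s.mono _ _ hE h).trans (s.star_star G hG).le

theorem star_mul_le (hE : E ≠ ⊥) : s.star E * F ≤ s.star (E * F) := by
  refine Submodule.mul_le.2 fun x hx y hy => ?_
  rcases eq_or_ne y 0 with rfl | hy0
  · simp
  have hyE : y • E ≤ E * F := by
    rw [← Submodule.span_singleton_mul]
    exact (mul_le_mul_left ((Submodule.span_singleton_le_iff_mem _ _).2 hy) E).trans_eq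
      (mul_comm F E)
  have hyE_star : y • s.star E ≤ s.star (E * F) := by
    rw [← s.smul_star y hy0 E hE]
    exact s.mono _ _ (fun h => hE (by rw [← inv_smul_smul₀ hy0 E, h, Submodule.smul_bot'])) hyE
  exact hyE_star (mul_comm x y ▸ Submodule.smul_mem_pointwise_smul x y _ hx)

theorem star_mul_star_le (hE : E ≠ ⊥) (hF : F ≠ ⊥) :
    s.star E * s.star F ≤ s.star (E * F) :=
  calc s.star E * s.star F = s.star F * s.star E := mul_comm _ _
    _ ≤ s.star (F * s.star E) := s.star_mul_le hF
    _ = s.star (s.star E * F) := by rw [mul_comm]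
    _ ≤ s.star (E * F) :=
      s.star_le_star_of_le_star (mul_ne_zero (s.star_ne_bot hE) hF) (mul_ne_zero hE hF)
        (s.star_mul_le hE)

theorem star_pow_le (hE : E ≠ ⊥) (n : ℕ) : s.star E ^ n ≤ s.star (E ^ n) := by
  induction n with
  | zero => simpa only [pow_zero] using s.le_star 1 one_ne_zero
  | succ n ih =>
    rw [pow_succ, pow_succ]
    exact (mul_le_mul_left ih _).trans (s.star_mul_star_le (pow_ne_zero n hE) hE)

variable {I J P Q : Ideal R}

theorem idealStar_mono (hI : I ≠ ⊥) (h : I ≤ J) : s.idealStar I ≤ s.idealStar J :=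
  s.mono _ _ (IsFractionRing.coeSubmodule_ne_bot hI) (coeSubmodule_mono K h)

theorem le_contract (hI : I ≠ ⊥) : I ≤ s.contract I := fun x hx =>
  s.le_star _ (IsFractionRing.coeSubmodule_ne_bot hI) ⟨x, hx, rfl⟩

theorem contract_mono (hI : I ≠ ⊥) (h : I ≤ J) : s.contract I ≤ s.contract J :=
  Submodule.comap_mono (s.idealStar_mono hI h)

theorem idealStar_contract (hI : I ≠ ⊥) : s.idealStar (s.contract I) = s.idealStar I := by
  have hJ : s.contract I ≠ ⊥ := ne_bot_of_le_ne_bot hI (s.le_contract hI)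
  exact le_antisymm
    (s.star_le_star_of_le_star (IsFractionRing.coeSubmodule_ne_bot hJ)
      (IsFractionRing.coeSubmodule_ne_bot hI) (Submodule.map_comap_le _ _))
    (s.idealStar_mono hI (s.le_contract hI))

theorem isQuasiStarIdeal_contract (hI : I ≠ ⊥) : s.IsQuasiStarIdeal (s.contract I) :=
  ⟨ne_bot_of_le_ne_bot hI (s.le_contract hI),
    congrArg (Submodule.comap _) (s.idealStar_contract hI)⟩

variable {s} in
theorem IsQuasiStarIdeal.contract_le_iff (hI : I ≠ ⊥) (hP : s.IsQuasiStarIdeal P) :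
    s.contract I ≤ P ↔ I ≤ P :=
  ⟨(s.le_contract hI).trans, fun h => (s.contract_mono hI h).trans hP.2.le⟩

variable {s} in
theorem IsQuasiStarIdeal.of_mem_minimalPrimes (hs : s.FiniteType) (hJ : s.IsQuasiStarIdeal J)
    (hQ : Q ∈ J.minimalPrimes) : s.IsQuasiStarIdeal Q := by
  have hQ_prime := hQ.isPrime
  have hQ0 : Q ≠ ⊥ := ne_bot_of_le_ne_bot hJ.1 hQ.le
  refine ⟨hQ0, le_antisymm (fun z hz => ?_) (s.le_contract hQ0)⟩
  obtain ⟨F, hFfg, hF0, hFQ, hzF⟩ := (hs _ (IsFractionRing.coeSubmodule_ne_bot hQ0) _).1 hz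
  obtain ⟨F₀, hF₀fg, hF₀Q, rfl⟩ := IsFractionRing.exists_fg_coeSubmodule_eq hFfg hFQ
  obtain ⟨t, htQ, n, htJ⟩ :=
    Ideal.exists_span_singleton_mul_pow_le_of_mem_minimalPrimes hQ hF₀fg hF₀Q
  have hF₀0 : F₀ ≠ ⊥ := IsFractionRing.coeSubmodule_eq_bot.not.1 hF0
  have ht0 : t ≠ 0 := fun h => htQ (h ▸ Q.zero_mem)
  have hzn : algebraMap R K z ^ n ∈ s.star (coeSubmodule K (F₀ ^ n)) := by
    rw [coeSubmodule_pow]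
    exact s.star_pow_le hF0 n (Submodule.pow_mem_pow _ hzF n)
  have ht : algebraMap R K t ∈ coeSubmodule K (Ideal.span {t}) :=
    ⟨t, Ideal.mem_span_singleton_self t, rfl⟩
  have hztn : z ^ n * t ∈ s.contract J := by
    have := s.star_mul_le (IsFractionRing.coeSubmodule_ne_bot (pow_ne_zero n hF₀0))
      (Submodule.mul_mem_mul hzn ht)
    rw [← coeSubmodule_mul, mul_comm, ← map_pow, ← map_mul] at this
    exact s.idealStar_mono (mul_ne_zero (Ideal.span_singleton_eq_bot.not.2 ht0)
      (pow_ne_zero n hF₀0)) htJ this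
  exact hQ_prime.mem_of_pow_mem n
    ((hQ_prime.mem_or_mem (hQ.le (hJ.2 ▸ hztn))).resolve_right htQ)

theorem mem_radical_contract_iff (hI : s.contract I ≠ ⊤) {x : R} :
    x ∈ (s.contract I).radical ↔ ∃ n : ℕ, 0 < n ∧ algebraMap R K x ^ n ∈ s.idealStar I := by
  simp only [← map_pow]
  refine ⟨fun ⟨n, hn⟩ => ⟨n, Nat.pos_of_ne_zero ?_, hn⟩, fun ⟨n, _, hn⟩ => ⟨n, hn⟩⟩
  rintro rfl
  exact hI ((Ideal.eq_top_iff_one _).2 (by simpa using hn))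

theorem starMin_eq_minimalPrimes_contract (hs : s.FiniteType) (hI : I ≠ ⊥) :
    s.starMin I = (s.contract I).minimalPrimes := by
  have hJ := s.isQuasiStarIdeal_contract hI
  ext P
  constructor
  · rintro ⟨⟨hP, hPq, hIP⟩, hmin⟩
    refine ⟨⟨hP, (hPq.contract_le_iff hI).2 hIP⟩, fun Q ⟨hQ, hJQ⟩ hQP => ?_⟩
    obtain ⟨Q', hQ', hQ'Q⟩ := Ideal.exists_minimalPrimes_le hJQ
    have hQ'q := hJ.of_mem_minimalPrimes hs hQ'
    exact (hmin ⟨hQ'.isPrime, hQ'q, (s.le_contract hI).trans hQ'.le⟩ (hQ'Q.trans hQP)).trans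
      hQ'Q
  · intro hP
    refine ⟨⟨hP.isPrime, hJ.of_mem_minimalPrimes hs hP, (s.le_contract hI).trans hP.le⟩, ?_⟩
    rintro Q ⟨hQ, hQq, hIQ⟩ hQP
    exact hP.2 ⟨hQ, (hQq.contract_le_iff hI).2 hIQ⟩ hQP

end SemistarOperation

theorem radical_star_inter_eq_sInf_starMin_general {R K : Type*} [CommRing R] [IsDomain R]
    [Field K] [Algebra R K] [IsFractionRing R K] (s : SemistarOperation R K)
    (hs : s.FiniteType) (I : Ideal R) (hI : I ≠ ⊥)
    (hne : s.contract I ≠ ⊤) :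
    {x : R | ∃ n : ℕ, 0 < n ∧ (algebraMap R K x) ^ n ∈ s.idealStar I} =
        ↑(s.contract I).radical ∧
      (s.contract I).radical = sInf (s.starMin I) := by
  refine ⟨Set.ext fun x => (s.mem_radical_contract_iff hne).symm, ?_⟩
  rw [s.starMin_eq_minimalPrimes_contract hs hI, Ideal.sInf_minimalPrimes]

/-- Let `⋆` be a stable semistar operation of finite type on the integral domain `R`,
and let `I` be a nonzero ideal of `R` with `I^⋆ ∩ R ≠ R`.  Then
`√(I^⋆) ∩ R = √(I^⋆ ∩ R) = ⋂_{P ∈ ⋆-Min(I)} P`. -/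
theorem radical_star_inter_eq_sInf_starMin {R K : Type*} [CommRing R] [IsDomain R]
    [Field K] [Algebra R K] [IsFractionRing R K] (s : SemistarOperation R K)
    (hstable : s.Stable) (hs : s.FiniteType) (I : Ideal R) (hI : I ≠ ⊥)
    (hne : s.contract I ≠ ⊤) :
    {x : R | ∃ n : ℕ, 0 < n ∧ (algebraMap R K x) ^ n ∈ s.idealStar I} =
        ↑(s.contract I).radical ∧
      (s.contract I).radical = sInf (s.starMin I) :=
  radical_star_inter_eq_sInf_starMin_general s hs I hI hne
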